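/- Let M be a left A-module with a flat connection ∇_M with respect to the universal differential calculus, with induced right operation m·a := a m − Σ m_A a m_M, and let N be any left A-module. Then the map c̃: M⊗N → N⊗M, c̃(m⊗n) = n⊗m − Σ m_A n ⊗ m_M, is balanced over A: c̃((m·a)⊗n) = c̃(m⊗(a n)) for all a ∈ A, m ∈ M, n ∈ N. -/

import Mathlib

open TensorProduct

variable (K A M : Type*) [Field K] [Ring A] [Algebra K A]
  [AddCommGroup M] [Module K M] [Module A M] [IsScalarTower K A M]

/-- The action map `A ⊗ M → M`, `a ⊗ m ↦ a • m`. -/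
noncomputable def actMap : A ⊗[K] M →ₗ[K] M :=
  TensorProduct.lift (LinearMap.mk₂ K (fun a m => a • m)
    (fun a b m => add_smul a b m)
    (fun k a m => smul_assoc k a m)
    (fun a m n => smul_add a m n)
    (fun k a m => (smul_comm k a m).symm))

/-- Left multiplication by `a : A` on a left `A`-module, as a `K`-linear map. -/
def lsmulMap (a : A) : M →ₗ[K] M where
  toFun := fun m => a • m
  map_add' := fun x y => smul_add a x y
  map_smul' := fun k m => (smul_comm k a m).symm

/-- `a ↦ a • n` as a `K`-linear map `A → M`. -/
def smulBy (n : M) : A →ₗ[K] M where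
  toFun := fun a => a • n
  map_add' := fun a b => add_smul a b n
  map_smul' := fun k a => smul_assoc k a n

/-- `D : M → A ⊗ M` is a connection with respect to the universal differential
calculus. -/
def IsConnection (D : M →ₗ[K] A ⊗[K] M) : Prop :=
  (∀ m : M, actMap K A M (D m) = 0) ∧
  ∀ (a : A) (m : M),
    D (a • m) = LinearMap.rTensor M (LinearMap.mulLeft K a) (D m)
      + (1 : A) ⊗ₜ[K] (a • m) - a ⊗ₜ[K] m

/-- Flatness of a connection: `Σ 1 ⊗ m_A ⊗ m_M = Σ m_A ⊗ D(m_M)`. -/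
def IsFlatConnection (D : M →ₗ[K] A ⊗[K] M) : Prop :=
  ∀ m : M, (1 : A) ⊗ₜ[K] (D m) = LinearMap.lTensor A D (D m)

/-- The induced right operation `m·a := a m − Σ m_A a m_M`. -/
noncomputable def rop (D : M →ₗ[K] A ⊗[K] M) (m : M) (a : A) : M :=
  a • m - actMap K A M (LinearMap.rTensor M (LinearMap.mulRight K a) (D m))

variable (N : Type*) [AddCommGroup N] [Module K N] [Module A N] [IsScalarTower K A N]

/-- The map `N ⊗ A → N`, `n ⊗ a ↦ a • n`. -/
noncomputable def ract : N ⊗[K] A →ₗ[K] N :=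
  TensorProduct.lift (LinearMap.mk₂ K (fun n a => a • n)
    (fun n₁ n₂ a => smul_add a n₁ n₂)
    (fun k n a => (smul_comm k a n).symm)
    (fun n a b => add_smul a b n)
    (fun k n a => smul_assoc k a n))

/-- The map `c̃ : M ⊗ N → N ⊗ M`, `m ⊗ n ↦ n ⊗ m − Σ (m_A • n) ⊗ m_M`, associated
with a connection `D` on `M`. -/
noncomputable def ctMap (D : M →ₗ[K] A ⊗[K] M) : M ⊗[K] N →ₗ[K] N ⊗[K] M :=
  (LinearMap.id - (LinearMap.rTensor M (ract K A N)).comp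
      (((TensorProduct.assoc K N A M).symm.toLinearMap).comp
        (LinearMap.lTensor N D))).comp
    (TensorProduct.comm K M N).toLinearMap

/-! Writing `g_n(x ⊗ y) = (x n) ⊗ y`, one has
`c̃(m ⊗ n) = n ⊗ m − g_n(∇ m)`. Extending the Leibniz rule to `∇(Σ x y) = Σ x ∇y + 1 ⊗ Σ x y − Σ x ⊗ y`
and using flatness to rewrite `Σ m_A ∇(m_M)` as `1 ⊗ ∇m`, one finds
`∇(m·a) = 1 ⊗ (m·a) − a ⊗ m + Σ m_A a ⊗ m_M`. Applying `g_n` and using `g_n(Σ m_A a ⊗ m_M) = g_{an}(∇m)`,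
the terms `n ⊗ (m·a)` cancel and `(a n) ⊗ m − g_{an}(∇m) = c̃(m ⊗ a n)` remains. -/

section

variable {K A M N}

omit [Module A M] [IsScalarTower K A M] in
lemma rTensor_mulLeft_eq_smul (a : A) (s : A ⊗[K] M) :
    LinearMap.rTensor M (LinearMap.mulLeft K a) s = a • s := by
  induction s using TensorProduct.induction_on with
  | zero => simp
  | tmul x y => simp [TensorProduct.smul_tmul']
  | add s₁ s₂ h₁ h₂ => rw [map_add, h₁, h₂, smul_add]

lemma actMap_tmul (a : A) (m : M) : actMap K A M (a ⊗ₜ[K] m) = a • m := rfl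

lemma IsConnection.map_actMap {D : M →ₗ[K] A ⊗[K] M} (hD : IsConnection K A M D)
    (t : A ⊗[K] M) :
    D (actMap K A M t) = actMap K A (A ⊗[K] M) (LinearMap.lTensor A D t)
      + (1 : A) ⊗ₜ[K] actMap K A M t - t := by
  induction t using TensorProduct.induction_on with
  | zero => simp
  | tmul x y =>
      rw [LinearMap.lTensor_tmul, actMap_tmul, actMap_tmul, hD.2, rTensor_mulLeft_eq_smul]
  | add t₁ t₂ h₁ h₂ =>
      simp only [map_add, h₁, h₂, TensorProduct.tmul_add]
      abel

lemma IsFlatConnection.map_rop {D : M →ₗ[K] A ⊗[K] M} (hflat : IsFlatConnection K A M D)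
    (hD : IsConnection K A M D) (a : A) (m : M) :
    D (rop K A M D m a) = (1 : A) ⊗ₜ[K] rop K A M D m a - a ⊗ₜ[K] m
      + LinearMap.rTensor M (LinearMap.mulRight K a) (D m) := by
  have hflat_a : LinearMap.lTensor A D (LinearMap.rTensor M (LinearMap.mulRight K a) (D m))
      = a ⊗ₜ[K] D m := by
    rw [← LinearMap.comp_apply, LinearMap.lTensor_comp_rTensor, ← LinearMap.rTensor_comp_lTensor,
      LinearMap.comp_apply, ← hflat m, LinearMap.rTensor_tmul, LinearMap.mulRight_apply, one_mul]
  rw [rop, map_sub, hD.map_actMap, hflat_a, actMap_tmul, hD.2, rTensor_mulLeft_eq_smul,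
    TensorProduct.tmul_sub]
  abel

omit [Module A M] [IsScalarTower K A M] in
lemma rTensor_smulBy_comp_rTensor_mulRight (a : A) (n : N) :
    LinearMap.rTensor M (smulBy K A N n) ∘ₗ LinearMap.rTensor M (LinearMap.mulRight K a)
      = LinearMap.rTensor M (smulBy K A N (a • n)) := by
  rw [← LinearMap.rTensor_comp]
  congr 1
  ext x
  simp [smulBy, mul_smul]

omit [Module A M] [IsScalarTower K A M] in
lemma ctMap_tmul (D : M →ₗ[K] A ⊗[K] M) (m : M) (n : N) :
    ctMap K A M N D (m ⊗ₜ[K] n) = n ⊗ₜ[K] m - LinearMap.rTensor M (smulBy K A N n) (D m) := by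
  simp only [ctMap, LinearMap.comp_apply, LinearMap.sub_apply, LinearEquiv.coe_coe,
    TensorProduct.comm_tmul, LinearMap.id_apply, LinearMap.lTensor_tmul, sub_right_inj]
  induction D m using TensorProduct.induction_on with
  | zero => simp
  | tmul x y => simp [ract, smulBy]
  | add s₁ s₂ h₁ h₂ => simp only [TensorProduct.tmul_add, map_add, h₁, h₂]

end

/-- For a flat connection `D` on `M`, the map
`c̃ : M ⊗ N → N ⊗ M`, `m ⊗ n ↦ n ⊗ m − Σ m_A n ⊗ m_M`, is balanced over `A`:
`c̃((m·a) ⊗ n) = c̃(m ⊗ (a n))`. -/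
theorem ctMap_balanced (D : M →ₗ[K] A ⊗[K] M) (hconn : IsConnection K A M D)
    (hflat : IsFlatConnection K A M D) (a : A) (m : M) (n : N) :
    ctMap K A M N D ((rop K A M D m a) ⊗ₜ[K] n) = ctMap K A M N D (m ⊗ₜ[K] (a • n)) := by
  rw [ctMap_tmul, ctMap_tmul, hflat.map_rop hconn, map_add, map_sub, ← LinearMap.comp_apply,
    rTensor_smulBy_comp_rTensor_mulRight]
  simp only [LinearMap.rTensor_tmul, smulBy, LinearMap.coe_mk, AddHom.coe_mk, one_smul]
  abel
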